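/- Let x, y ∈ ℤ, let S be a finite set of functions f_i(z) = a_i·z + b_i with a_i, b_i ∈ ℤ and a_i ≠ 0, let k ∈ ℤ with k ≠ 0, let g(z) = z + k, and let F = S ∪ {g}. If there exists an S-composition G = (f_{e_1}, …, f_{e_K}) with G(x) ≡ y (mod k) such that a_{e_j} < 0 for some j, then x →_F y. -/

import Mathlib

/-!
Inserting `t` copies of `g` into a composition at a point after which the remaining
coefficients multiply to `c` moves the output by `c t k`, and appending `s` copies at the end
moves it by `s k`. If `c < 0`, then `c t + s` takes every integer value with `t, s ≥ 0`, so an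
output congruent to `y` modulo `k` can be corrected to `y` exactly. Such a point exists around
any negative coefficient `a`: the coefficients after `a` multiply to some `P ≠ 0`, and either
`P < 0` or `a P < 0`.
-/

/-- Apply the composition given by the tuple `L = (f₁, …, f_K)` of affine functions
(encoded by coefficient pairs `(a, b)`, i.e. `z ↦ a·z + b`), viewed as `f_K ∘ ⋯ ∘ f₁`. -/
def applyComp (L : List (ℤ × ℤ)) (x : ℤ) : ℤ := L.foldl (fun z p => p.1 * z + p.2) x

lemma applyComp_append (L₁ L₂ : List (ℤ × ℤ)) (x : ℤ) :
    applyComp (L₁ ++ L₂) x = applyComp L₂ (applyComp L₁ x) := by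
  simp [applyComp, List.foldl_append]

lemma applyComp_replicate (n : ℕ) (k x : ℤ) :
    applyComp (List.replicate n (1, k)) x = x + n * k := by
  induction n generalizing x with
  | zero => simp [applyComp]
  | succ n ih =>
    rw [List.replicate_succ', applyComp_append, ih]
    simp only [applyComp, List.foldl_cons, List.foldl_nil]
    push_cast
    ring

lemma applyComp_add (L : List (ℤ × ℤ)) (z d : ℤ) :
    applyComp L (z + d) = applyComp L z + (L.map Prod.fst).prod * d := by
  induction L generalizing z d with
  | nil => simp [applyComp]
  | cons p L ih =>
    simp only [applyComp, List.foldl_cons, List.map_cons, List.prod_cons] at *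
    rw [show p.1 * (z + d) + p.2 = (p.1 * z + p.2) + p.1 * d by ring, ih]
    ring

lemma exists_nat_mul_add_nat_eq {c : ℤ} (hc : c < 0) (m : ℤ) :
    ∃ t s : ℕ, c * t + s = m := by
  refine ⟨m.natAbs, (m - c * m.natAbs).toNat, ?_⟩
  have : c * m.natAbs ≤ m := by
    have : -(m.natAbs : ℤ) ≤ m := by omega
    nlinarith [Int.natCast_nonneg m.natAbs]
  rw [Int.toNat_of_nonneg (by omega)]
  ring

lemma exists_applyComp_replicate_eq {L₁ L₂ : List (ℤ × ℤ)} {x y k : ℤ}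
    (hprod : (L₂.map Prod.fst).prod < 0) (hmod : applyComp (L₁ ++ L₂) x ≡ y [ZMOD k]) :
    ∃ t s : ℕ, applyComp
      (L₁ ++ List.replicate t (1, k) ++ L₂ ++ List.replicate s (1, k)) x = y := by
  obtain ⟨m, hm⟩ := Int.modEq_iff_dvd.mp hmod
  obtain ⟨t, s, hts⟩ := exists_nat_mul_add_nat_eq hprod m
  refine ⟨t, s, ?_⟩
  rw [applyComp_append] at hm
  rw [applyComp_append, applyComp_append, applyComp_append, applyComp_replicate,
    applyComp_replicate, applyComp_add]
  linear_combination k * hts - hm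

theorem case_negative_coeff_general (x y : ℤ) (S : Finset (ℤ × ℤ)) (hS : ∀ p ∈ S, p.1 ≠ 0)
    (k : ℤ)
    (hex : ∃ G : List (ℤ × ℤ), (∀ p ∈ G, p ∈ S) ∧ applyComp G x ≡ y [ZMOD k] ∧
      ∃ p ∈ G, p.1 < 0) :
    ∃ G : List (ℤ × ℤ), (∀ p ∈ G, p ∈ insert ((1 : ℤ), k) S) ∧ applyComp G x = y := by
  obtain ⟨G, hGS, hmod, p, hpG, hp⟩ := hex
  obtain ⟨G₁, G₂, rfl⟩ := List.append_of_mem hpG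
  have hG₂ : (G₂.map Prod.fst).prod ≠ 0 :=
    List.prod_ne_zero fun h0 ↦ by
      obtain ⟨q, hq, hq0⟩ := List.mem_map.mp h0
      exact hS q (hGS q (by simp [hq])) hq0
  obtain ⟨L₁, L₂, hsplit, hprod⟩ : ∃ L₁ L₂ : List (ℤ × ℤ), G₁ ++ p :: G₂ = L₁ ++ L₂ ∧
      (L₂.map Prod.fst).prod < 0 := by
    rcases hG₂.lt_or_gt with hneg | hpos
    · exact ⟨G₁ ++ [p], G₂, by simp, hneg⟩
    · exact ⟨G₁, p :: G₂, rfl, by simpa using mul_neg_of_neg_of_pos hp hpos⟩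
  rw [hsplit] at hGS hmod
  obtain ⟨t, s, hts⟩ := exists_applyComp_replicate_eq hprod hmod
  refine ⟨_, fun q hq ↦ ?_, hts⟩
  simp only [List.mem_append, List.mem_replicate] at hq
  rcases hq with ((hq | ⟨-, rfl⟩) | hq) | ⟨-, rfl⟩
  all_goals simp_all

/-- Case (C): if some `S`-composition `G` with `G(x) ≡ y (mod k)` contains a function with
negative linear coefficient, then some `F`-composition maps `x` to `y`, where
`F = S ∪ {g}` with `g(z) = z + k` (encoded as the pair `(1, k)`). -/
theorem case_negative_coeff (x y : ℤ) (S : Finset (ℤ × ℤ)) (hS : ∀ p ∈ S, p.1 ≠ 0)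
    (k : ℤ) (hk : k ≠ 0)
    (hex : ∃ G : List (ℤ × ℤ), (∀ p ∈ G, p ∈ S) ∧ applyComp G x ≡ y [ZMOD k] ∧
      ∃ p ∈ G, p.1 < 0) :
    ∃ G : List (ℤ × ℤ), (∀ p ∈ G, p ∈ insert ((1 : ℤ), k) S) ∧ applyComp G x = y :=
  case_negative_coeff_general x y S hS k hex
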